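/- arXiv:2307.15869 — 2 statements merged into one kernel-verified Lean document; each statement's English description precedes it below -/
import Mathlib

section
/- Let X be a real locally convex topological vector space and let Ω ⊂ X be a nonempty convex set. If x̄ ∈ sqri(Ω) (respectively x̄ ∈ ri(Ω), x̄ ∈ iri(Ω), x̄ ∈ qri(Ω)) and x₀ ∈ Ω, then for every t ∈ [0,1) one has (1−t)x̄ + t x₀ ∈ sqri(Ω) (respectively ∈ ri(Ω), ∈ iri(Ω), ∈ qri(Ω)). -/
open Pointwise Set

/-- Conic hull: `cone(A) = {λa : λ ≥ 0, a ∈ A}`. -/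
def coneHull {Z : Type*} [AddCommGroup Z] [Module ℝ Z] (A : Set Z) : Set Z :=
  {y | ∃ c : ℝ, 0 ≤ c ∧ ∃ a ∈ A, y = c • a}

/-- A set is a linear subspace if it underlies some `ℝ`-submodule. -/
def IsLinearSubspace {Z : Type*} [AddCommGroup Z] [Module ℝ Z] (S : Set Z) : Prop :=
  ∃ L : Submodule ℝ Z, (L : Set Z) = S

/-- Intrinsic relative interior. -/
def iri {Z : Type*} [AddCommGroup Z] [Module ℝ Z] (A : Set Z) : Set Z :=
  {x ∈ A | IsLinearSubspace (coneHull (A - {x}))}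

/-- Strong quasi-relative interior. -/
def sqri {Z : Type*} [AddCommGroup Z] [Module ℝ Z] [TopologicalSpace Z] (A : Set Z) : Set Z :=
  {x ∈ A | IsLinearSubspace (coneHull (A - {x})) ∧ IsClosed (coneHull (A - {x}))}

/-- Quasi-relative interior. -/
def qri {Z : Type*} [AddCommGroup Z] [Module ℝ Z] [TopologicalSpace Z] (A : Set Z) : Set Z :=
  {x ∈ A | IsLinearSubspace (closure (coneHull (A - {x})))}

/-- Interior of a set relative to the closure of its affine hull. -/
def ri {X : Type*} [AddCommGroup X] [Module ℝ X] [TopologicalSpace X] (A : Set X) : Set X :=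
  {x ∈ A | ∃ V ∈ nhds (0 : X), ∀ v ∈ V, x + v ∈ closure (affineSpan ℝ A : Set X) → x + v ∈ A}

/-!
Write `x_t = lineMap x̄ x₀ t`. For `ω ∈ Ω` the point `x_t + (1 - t)(ω - x̄)` lies on the segment
`[x₀, ω] ⊆ Ω`, so `cone(Ω - x̄) ⊆ cone(Ω - x_t)`. Conversely `ω - x_t = (ω - x̄) - t (x₀ - x̄)`,
so `cone(Ω - x_t)` lies in every linear subspace containing `Ω - x̄`. Hence whenever `cone(Ω - x̄)`
(or its closure) is a linear subspace, the cones at `x̄` and at `x_t` (or their closures) coincide,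
which settles `iri`, `sqri` and `qri`. For `ri`, a neighbourhood `V` witnessing `x̄ ∈ ri Ω` is shrunk
to `(1 - t) V`: the homothety of centre `x₀` and ratio `(1 - t)⁻¹` carries `x_t + (1 - t) v` to
`x̄ + v` and preserves the closed affine hull of `Ω`.
-/

open AffineMap

section Cone

variable {X : Type*} [AddCommGroup X] [Module ℝ X]

lemma subset_coneHull (A : Set X) : A ⊆ coneHull A :=
  fun a ha => ⟨1, zero_le_one, a, ha, (one_smul ℝ a).symm⟩

lemma coneHull_subset_submodule {A : Set X} {S : Submodule ℝ X} (h : A ⊆ S) :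
    coneHull A ⊆ S := by
  rintro _ ⟨c, -, a, ha, rfl⟩
  exact S.smul_mem c (h ha)

variable {Ω : Set X} {xbar x₀ : X} {t : ℝ}

lemma coneHull_sub_subset_coneHull_sub_lineMap (hconv : Convex ℝ Ω) (hx₀ : x₀ ∈ Ω)
    (ht : t ∈ Ico (0 : ℝ) 1) :
    coneHull (Ω - {xbar}) ⊆ coneHull (Ω - {lineMap xbar x₀ t}) := by
  simp only [sub_singleton]
  rintro _ ⟨c, hc, _, ⟨ω, hω, rfl⟩, rfl⟩
  have hs : 0 < 1 - t := sub_pos.2 ht.2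
  refine ⟨c / (1 - t), div_nonneg hc hs.le, (1 - t) • (ω - xbar),
    ⟨lineMap ω x₀ t, hconv.lineMap_mem hω hx₀ ⟨ht.1, ht.2.le⟩, ?_⟩, ?_⟩
  · simp only [lineMap_apply_module]
    module
  · rw [smul_smul, div_mul_cancel₀ c hs.ne']

lemma sub_lineMap_subset_submodule {S : Submodule ℝ X} (hx₀ : x₀ ∈ Ω)
    (h : Ω - {xbar} ⊆ S) : Ω - {lineMap xbar x₀ t} ⊆ S := by
  rintro _ ⟨ω, hω, _, rfl, rfl⟩
  dsimp only
  have hω' : ω - xbar ∈ S := h (sub_mem_sub hω rfl)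
  have hx₀' : x₀ - xbar ∈ S := h (sub_mem_sub hx₀ rfl)
  have heq : ω - lineMap xbar x₀ t = (ω - xbar) - t • (x₀ - xbar) := by
    simp only [lineMap_apply_module]
    module
  rw [heq]
  exact S.sub_mem hω' (S.smul_mem t hx₀')

lemma coneHull_sub_lineMap_eq (hconv : Convex ℝ Ω) (hx₀ : x₀ ∈ Ω) (ht : t ∈ Ico (0 : ℝ) 1)
    (hlin : IsLinearSubspace (coneHull (Ω - {xbar}))) :
    coneHull (Ω - {lineMap xbar x₀ t}) = coneHull (Ω - {xbar}) := by
  obtain ⟨L, hL⟩ := hlin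
  refine (coneHull_sub_subset_coneHull_sub_lineMap hconv hx₀ ht).antisymm' ?_
  rw [← hL]
  exact coneHull_subset_submodule <|
    sub_lineMap_subset_submodule hx₀ (hL ▸ subset_coneHull _)

lemma closure_coneHull_sub_lineMap_eq [TopologicalSpace X] (hconv : Convex ℝ Ω)
    (hx₀ : x₀ ∈ Ω) (ht : t ∈ Ico (0 : ℝ) 1)
    (hlin : IsLinearSubspace (closure (coneHull (Ω - {xbar})))) :
    closure (coneHull (Ω - {lineMap xbar x₀ t})) = closure (coneHull (Ω - {xbar})) := by
  obtain ⟨L, hL⟩ := hlin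
  refine (closure_mono (coneHull_sub_subset_coneHull_sub_lineMap hconv hx₀ ht)).antisymm' ?_
  rw [← hL]
  refine closure_minimal (coneHull_subset_submodule <| sub_lineMap_subset_submodule hx₀ ?_)
    (hL ▸ isClosed_closure)
  rw [hL]
  exact (subset_coneHull _).trans subset_closure

lemma lineMap_mem_iri (hconv : Convex ℝ Ω) (hx₀ : x₀ ∈ Ω) (ht : t ∈ Ico (0 : ℝ) 1)
    (hxbar : xbar ∈ iri Ω) : lineMap xbar x₀ t ∈ iri Ω :=
  ⟨hconv.lineMap_mem hxbar.1 hx₀ ⟨ht.1, ht.2.le⟩,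
    coneHull_sub_lineMap_eq hconv hx₀ ht hxbar.2 ▸ hxbar.2⟩

lemma lineMap_mem_sqri [TopologicalSpace X] (hconv : Convex ℝ Ω) (hx₀ : x₀ ∈ Ω)
    (ht : t ∈ Ico (0 : ℝ) 1) (hxbar : xbar ∈ sqri Ω) : lineMap xbar x₀ t ∈ sqri Ω := by
  obtain ⟨hxbarΩ, hlin, hclosed⟩ := hxbar
  refine ⟨hconv.lineMap_mem hxbarΩ hx₀ ⟨ht.1, ht.2.le⟩, ?_⟩
  rw [coneHull_sub_lineMap_eq hconv hx₀ ht hlin]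
  exact ⟨hlin, hclosed⟩

lemma lineMap_mem_qri [TopologicalSpace X] (hconv : Convex ℝ Ω) (hx₀ : x₀ ∈ Ω)
    (ht : t ∈ Ico (0 : ℝ) 1) (hxbar : xbar ∈ qri Ω) : lineMap xbar x₀ t ∈ qri Ω :=
  ⟨hconv.lineMap_mem hxbar.1 hx₀ ⟨ht.1, ht.2.le⟩,
    closure_coneHull_sub_lineMap_eq hconv hx₀ ht hxbar.2 ▸ hxbar.2⟩

end Cone

section RelativeInterior

variable {X : Type*} [AddCommGroup X] [Module ℝ X] [TopologicalSpace X]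
  [IsTopologicalAddGroup X] [ContinuousConstSMul ℝ X]

lemma AffineSubspace.mapsTo_homothety_closure (E : AffineSubspace ℝ X) {c : X} (hc : c ∈ E)
    (r : ℝ) : MapsTo (homothety c r) (closure E) (closure E) :=
  fun _ hy => map_mem_closure (homothety_continuous c r) hy
    fun _ hz => E.smul_vsub_vadd_mem r hz hc hc

lemma lineMap_mem_ri {Ω : Set X} {xbar x₀ : X} {t : ℝ} (hconv : Convex ℝ Ω) (hx₀ : x₀ ∈ Ω)
    (ht : t ∈ Ico (0 : ℝ) 1) (hxbar : xbar ∈ ri Ω) : lineMap xbar x₀ t ∈ ri Ω := by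
  obtain ⟨hxbarΩ, V, hV, hri⟩ := hxbar
  have hs : 1 - t ≠ 0 := (sub_pos.2 ht.2).ne'
  have ht' : t ∈ Icc (0 : ℝ) 1 := ⟨ht.1, ht.2.le⟩
  refine ⟨hconv.lineMap_mem hxbarΩ hx₀ ht', (1 - t) • V,
    (set_smul_mem_nhds_zero_iff hs).2 hV, ?_⟩
  rintro _ ⟨v, hv, rfl⟩ hclos
  have hshift : lineMap xbar x₀ t + (1 - t) • v = lineMap (xbar + v) x₀ t := by
    simp only [lineMap_apply_module]
    module
  have hback : homothety x₀ (1 - t)⁻¹ (lineMap (xbar + v) x₀ t) = xbar + v := by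
    rw [← lineMap_apply_one_sub, ← homothety_eq_lineMap, ← homothety_mul_apply,
      inv_mul_cancel₀ hs, homothety_one, id_apply]
  have hmem : xbar + v ∈ closure (affineSpan ℝ Ω : Set X) := by
    rw [← hback, ← hshift]
    exact (affineSpan ℝ Ω).mapsTo_homothety_closure (subset_affineSpan ℝ Ω hx₀) _ hclos
  rw [hshift]
  exact hconv.lineMap_mem (hri v hv hmem) hx₀ ht'

end RelativeInterior

theorem stmt8_general {X : Type*} [AddCommGroup X] [Module ℝ X] [TopologicalSpace X]
    [IsTopologicalAddGroup X] [ContinuousSMul ℝ X]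
    (Ω : Set X) (hconv : Convex ℝ Ω)
    (xbar x₀ : X) (hx₀ : x₀ ∈ Ω) (t : ℝ) (ht : t ∈ Set.Ico (0 : ℝ) 1) :
    (xbar ∈ sqri Ω → (1 - t) • xbar + t • x₀ ∈ sqri Ω) ∧
    (xbar ∈ ri Ω → (1 - t) • xbar + t • x₀ ∈ ri Ω) ∧
    (xbar ∈ iri Ω → (1 - t) • xbar + t • x₀ ∈ iri Ω) ∧
    (xbar ∈ qri Ω → (1 - t) • xbar + t • x₀ ∈ qri Ω) := by
  simp only [← lineMap_apply_module]
  exact ⟨lineMap_mem_sqri hconv hx₀ ht, lineMap_mem_ri hconv hx₀ ht,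
    lineMap_mem_iri hconv hx₀ ht, lineMap_mem_qri hconv hx₀ ht⟩

theorem stmt8 {X : Type*} [AddCommGroup X] [Module ℝ X] [TopologicalSpace X]
    [IsTopologicalAddGroup X] [ContinuousSMul ℝ X] [LocallyConvexSpace ℝ X]
    (Ω : Set X) (hne : Ω.Nonempty) (hconv : Convex ℝ Ω)
    (xbar x₀ : X) (hx₀ : x₀ ∈ Ω) (t : ℝ) (ht : t ∈ Set.Ico (0 : ℝ) 1) :
    (xbar ∈ sqri Ω → (1 - t) • xbar + t • x₀ ∈ sqri Ω) ∧
    (xbar ∈ ri Ω → (1 - t) • xbar + t • x₀ ∈ ri Ω) ∧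
    (xbar ∈ iri Ω → (1 - t) • xbar + t • x₀ ∈ iri Ω) ∧
    (xbar ∈ qri Ω → (1 - t) • xbar + t • x₀ ∈ qri Ω) :=
  stmt8_general Ω hconv xbar x₀ hx₀ t ht
end

section
/- Let X and Y be real locally convex topological vector spaces, let T : X → Y be a continuous linear mapping that maps every closed linear subspace of X onto a closed linear subspace of Y, and let Ω ⊂ X be a nonempty convex set. Then T(sqri(Ω)) ⊂ sqri(T(Ω)). If in addition sqri(Ω) ≠ ∅ and sqri(Ω) = iri(Ω), then T(sqri(Ω)) = sqri(T(Ω)). -/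
open Pointwise Set

/-!
A point `x` of a convex set `Ω` lies in `iri Ω` exactly when the directions `x - a`, `a ∈ Ω`, lie
in the cone `cone(Ω - x)`. A linear map carries the cone at `x` onto the cone at `T x`, which gives
the inclusion `T(sqri Ω) ⊆ sqri(T Ω)` (closedness being supplied by the hypothesis on `T`).
Conversely, if `xs ∈ iri Ω` and `T x₀ ∈ iri(T Ω)`, then `T x₀ - T xs = c • (T w - T x₀)` for some
`c ≥ 0` and `w ∈ Ω`, and the point `x` of the segment `[xs, w]` with `T x = T x₀` lies in `iri Ω`:
both `± (x - xs)` belong to `cone(Ω - x)`, so this cone contains `cone(Ω - xs)`, a linear subspace.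
-/

section ConeHull

variable {Z : Type*} [AddCommGroup Z] [Module ℝ Z]

lemma mem_coneHull_sub_singleton {A : Set Z} {x y : Z} :
    y ∈ coneHull (A - {x}) ↔ ∃ c : ℝ, 0 ≤ c ∧ ∃ a ∈ A, y = c • (a - x) := by
  simp [coneHull, Set.sub_singleton]

lemma sub_mem_coneHull_sub_singleton {A : Set Z} {x a : Z} (ha : a ∈ A) :
    a - x ∈ coneHull (A - {x}) :=
  mem_coneHull_sub_singleton.mpr ⟨1, zero_le_one, a, ha, (one_smul ℝ _).symm⟩

lemma smul_mem_coneHull {A : Set Z} {c : ℝ} (hc : 0 ≤ c) {u : Z} (hu : u ∈ coneHull A) :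
    c • u ∈ coneHull A := by
  obtain ⟨d, hd, a, ha, rfl⟩ := hu
  exact ⟨c * d, mul_nonneg hc hd, a, ha, smul_smul c d a⟩

lemma Convex.add_mem_coneHull {A : Set Z} (hA : Convex ℝ A) {u v : Z}
    (hu : u ∈ coneHull A) (hv : v ∈ coneHull A) : u + v ∈ coneHull A := by
  obtain ⟨c, hc, a, ha, rfl⟩ := hu
  obtain ⟨d, hd, b, hb, rfl⟩ := hv
  rcases (add_nonneg hc hd).eq_or_lt with hcd | hcd
  · obtain ⟨rfl, rfl⟩ : c = 0 ∧ d = 0 := ⟨by linarith, by linarith⟩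
    exact ⟨0, le_rfl, a, ha, by simp⟩
  · -- `c • a + d • b` is `c + d` times the convex combination with weights `c / (c + d)`, `d / (c + d)`
    refine ⟨c + d, hcd.le, (c / (c + d)) • a + (d / (c + d)) • b,
      hA ha hb (by positivity) (by positivity) (by field_simp), ?_⟩
    match_scalars <;> field_simp

lemma Convex.isLinearSubspace_coneHull {A : Set Z} (hA : Convex ℝ A) (hne : A.Nonempty)
    (hneg : ∀ u ∈ coneHull A, -u ∈ coneHull A) : IsLinearSubspace (coneHull A) := by
  obtain ⟨a, ha⟩ := hne
  refine ⟨{ carrier := coneHull A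
            zero_mem' := ⟨0, le_rfl, a, ha, (zero_smul ℝ a).symm⟩
            add_mem' := hA.add_mem_coneHull
            smul_mem' := fun r u hu => ?_ }, rfl⟩
  rcases le_total 0 r with hr | hr
  · exact smul_mem_coneHull hr hu
  · simpa using smul_mem_coneHull (neg_nonneg.mpr hr) (hneg u hu)

lemma coneHull_image {F Y : Type*} [AddCommGroup Y] [Module ℝ Y] [FunLike F Z Y]
    [LinearMapClass F ℝ Z Y] (f : F) (A : Set Z) : coneHull (f '' A) = f '' coneHull A := by
  ext y
  constructor
  · rintro ⟨c, hc, _, ⟨a, ha, rfl⟩, rfl⟩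
    exact ⟨c • a, ⟨c, hc, a, ha, rfl⟩, map_smul f c a⟩
  · rintro ⟨_, ⟨c, hc, a, ha, rfl⟩, rfl⟩
    exact ⟨c, hc, f a, ⟨a, ha, rfl⟩, map_smul f c a⟩

lemma coneHull_image_sub_singleton {F Y : Type*} [AddCommGroup Y] [Module ℝ Y] [FunLike F Z Y]
    [LinearMapClass F ℝ Z Y] (f : F) (A : Set Z) (x : Z) :
    coneHull (f '' A - {f x}) = f '' coneHull (A - {x}) := by
  rw [← coneHull_image, Set.sub_singleton, Set.sub_singleton, Set.image_image, Set.image_image]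
  simp only [map_sub]

end ConeHull

section IntrinsicRelativeInterior

variable {Z : Type*} [AddCommGroup Z] [Module ℝ Z]

lemma sub_mem_coneHull_of_mem_iri {A : Set Z} {x a : Z} (hx : x ∈ iri A) (ha : a ∈ A) :
    x - a ∈ coneHull (A - {x}) := by
  obtain ⟨-, L, hL⟩ := hx
  have hax : a - x ∈ (L : Set Z) := hL ▸ sub_mem_coneHull_sub_singleton ha
  rw [← hL]
  simpa using L.neg_mem hax

lemma Convex.mem_iri_of_sub_mem_coneHull {Ω : Set Z} (hΩ : Convex ℝ Ω) {xs x : Z}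
    (hxs : xs ∈ iri Ω) (hx : x ∈ Ω) (hsub : x - xs ∈ coneHull (Ω - {x})) : x ∈ iri Ω := by
  have hconv : Convex ℝ (Ω - {x}) := hΩ.sub (convex_singleton x)
  have hcone : ∀ a ∈ Ω, a - xs ∈ coneHull (Ω - {x}) := fun a ha => by
    simpa using hconv.add_mem_coneHull (sub_mem_coneHull_sub_singleton ha) hsub
  refine ⟨hx, hconv.isLinearSubspace_coneHull ⟨x - x, Set.sub_mem_sub hx rfl⟩ fun u hu => ?_⟩
  obtain ⟨c, hc, a, ha, rfl⟩ := mem_coneHull_sub_singleton.mp hu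
  obtain ⟨d, hd, b, hb, hab⟩ := mem_coneHull_sub_singleton.mp (sub_mem_coneHull_of_mem_iri hxs ha)
  have hxa : x - a = (x - xs) + d • (b - xs) := by rw [← hab]; abel
  rw [← smul_neg, neg_sub, hxa]
  exact smul_mem_coneHull hc (hconv.add_mem_coneHull hsub (smul_mem_coneHull hd (hcone b hb)))

lemma sqri_subset_iri {A : Set Z} [TopologicalSpace Z] : sqri A ⊆ iri A :=
  fun _ hx => ⟨hx.1, hx.2.1⟩

variable {Y F : Type*} [AddCommGroup Y] [Module ℝ Y] [FunLike F Z Y] [LinearMapClass F ℝ Z Y]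

lemma image_sqri_subset_sqri_image [TopologicalSpace Z] [TopologicalSpace Y] {f : F}
    (hf : ∀ L : Submodule ℝ Z, IsClosed (L : Set Z) → IsClosed (f '' (L : Set Z))) (A : Set Z) :
    f '' sqri A ⊆ sqri (f '' A) := by
  rintro _ ⟨x, ⟨hxA, ⟨L, hL⟩, hclosed⟩, rfl⟩
  rw [← hL] at hclosed
  refine ⟨Set.mem_image_of_mem f hxA, ?_⟩
  rw [coneHull_image_sub_singleton, ← hL]
  exact ⟨⟨L.map (f : Z →ₗ[ℝ] Y), Submodule.map_coe _ L⟩, hf L hclosed⟩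

lemma Convex.iri_image_subset_image_iri {Ω : Set Z} (hΩ : Convex ℝ Ω) (hne : (iri Ω).Nonempty)
    (f : F) : iri (f '' Ω) ⊆ f '' iri Ω := by
  rintro _ hy
  obtain ⟨xs, hxs⟩ := hne
  obtain ⟨x₀, hx₀, rfl⟩ := hy.1
  obtain ⟨c, hc, _, ⟨w, hw, rfl⟩, hrel⟩ := mem_coneHull_sub_singleton.mp
    (sub_mem_coneHull_of_mem_iri hy (Set.mem_image_of_mem f hxs.1))
  -- `hrel : f x₀ - f xs = c • (f w - f x₀)`, so `f x₀ = f x` for this point of the segment `[xs, w]`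
  set x := (1 + c)⁻¹ • xs + (c / (1 + c)) • w
  have hx : x ∈ Ω := hΩ hxs.1 hw (by positivity) (by positivity) (by field_simp)
  have hfx : f x = f x₀ := by
    have hx₀ : f x₀ = (1 + c)⁻¹ • f xs + (c / (1 + c)) • f w := by
      have : (1 + c) • f x₀ = f xs + c • f w := by linear_combination (norm := module) hrel
      rw [← inv_smul_smul₀ (by positivity : (1 + c) ≠ 0) (f x₀), this]
      match_scalars <;> field_simp
    simp only [x, map_add, map_smul, hx₀]
  have hsub : x - xs = c • (w - x) := by
    simp only [x]
    match_scalars <;> field_simp <;> ring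
  refine ⟨x, hΩ.mem_iri_of_sub_mem_coneHull hxs hx ?_, hfx⟩
  rw [hsub]
  exact smul_mem_coneHull hc (sub_mem_coneHull_sub_singleton hw)

end IntrinsicRelativeInterior

theorem stmt10_general {X Y : Type*}
    [AddCommGroup X] [Module ℝ X] [TopologicalSpace X]
    [AddCommGroup Y] [Module ℝ Y] [TopologicalSpace Y]
    (T : X →L[ℝ] Y)
    (hT : ∀ L : Submodule ℝ X, IsClosed (L : Set X) → IsClosed (T '' (L : Set X)))
    (Ω : Set X) (hconv : Convex ℝ Ω) :
    T '' sqri Ω ⊆ sqri (T '' Ω) ∧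
    ((sqri Ω).Nonempty → sqri Ω = iri Ω → T '' sqri Ω = sqri (T '' Ω)) := by
  refine ⟨image_sqri_subset_sqri_image hT Ω, fun hne hsqri => ?_⟩
  refine (image_sqri_subset_sqri_image hT Ω).antisymm ?_
  calc sqri (T '' Ω) ⊆ iri (T '' Ω) := sqri_subset_iri
    _ ⊆ T '' iri Ω := hconv.iri_image_subset_image_iri (hsqri ▸ hne) T
    _ = T '' sqri Ω := by rw [hsqri]

theorem stmt10 {X Y : Type*}
    [AddCommGroup X] [Module ℝ X] [TopologicalSpace X]
    [IsTopologicalAddGroup X] [ContinuousSMul ℝ X] [LocallyConvexSpace ℝ X]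
    [AddCommGroup Y] [Module ℝ Y] [TopologicalSpace Y]
    [IsTopologicalAddGroup Y] [ContinuousSMul ℝ Y] [LocallyConvexSpace ℝ Y]
    (T : X →L[ℝ] Y)
    (hT : ∀ L : Submodule ℝ X, IsClosed (L : Set X) → IsClosed (T '' (L : Set X)))
    (Ω : Set X) (hne : Ω.Nonempty) (hconv : Convex ℝ Ω) :
    T '' sqri Ω ⊆ sqri (T '' Ω) ∧
    ((sqri Ω).Nonempty → sqri Ω = iri Ω → T '' sqri Ω = sqri (T '' Ω)) :=
  stmt10_general T hT Ω hconv
end
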